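/- Under the setup of the previous statement (ρ convex C¹ with L-Lipschitz non-decreasing derivative ψ, g τ-strongly convex, β̂, h, ψ̂ defined accordingly), for any fixed ε ∈ ℝ^n, η ∈ ℝ^n, and a ∈ ℝ^p: nτ‖β̂(ε, X + ηaᵀ) - β̂(ε, X)‖₂² + L^{-1}‖ψ̂(ε, X + ηaᵀ) - ψ̂(ε, X)‖₂² ≤ (nτ)^{-1}‖a‖₂²(ηᵀψ̂)² + L(hᵀa)²‖η‖₂², where h = h(ε,X) and ψ̂ = ψ̂(ε,X). -/

import Mathlib

/-!
Both estimators satisfy the first-order variational inequality of a `τ`-strongly convex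
objective, tested in the direction of the other one. Adding the two inequalities cancels the
`g` terms, and since the designs differ by the rank-one matrix `ηaᵀ` one is left with
`nτ‖Δh‖² + ⟨Δψ̂, Δr⟩ ≤ (aᵀΔh)(ηᵀψ̂) - (hᵀa)(ηᵀΔψ̂)`, `r` denoting the residuals. A monotone
`L`-Lipschitz `ψ` is co-coercive, `⟨Δψ̂, Δr⟩ ≥ L⁻¹‖Δψ̂‖²`, and the two products on the right are
split by weighted AM-GM, absorbing half of the left-hand side.
-/

open Matrix Set Filter Finset

lemma ConvexOn.monotone_of_hasDerivAt {ρ ψ : ℝ → ℝ} (hρ : ConvexOn ℝ univ ρ)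
    (hderiv : ∀ x, HasDerivAt ρ (ψ x) x) : Monotone ψ := by
  have hmono := hρ.monotoneOn_deriv fun x _ => (hderiv x).differentiableAt
  rwa [funext fun x => (hderiv x).deriv, monotoneOn_univ] at hmono

lemma Monotone.sq_sub_le_of_lipschitzWith {ψ : ℝ → ℝ} {L : NNReal} (hmono : Monotone ψ)
    (hlip : LipschitzWith L ψ) (x y : ℝ) :
    (ψ y - ψ x) ^ 2 ≤ L * ((ψ y - ψ x) * (y - x)) := by
  have hprod : 0 ≤ (ψ y - ψ x) * (y - x) := by
    rcases le_total x y with hxy | hyx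
    · exact mul_nonneg (sub_nonneg.2 (hmono hxy)) (sub_nonneg.2 hxy)
    · exact mul_nonneg_of_nonpos_of_nonpos (sub_nonpos.2 (hmono hyx)) (sub_nonpos.2 hyx)
  have hdist : |ψ y - ψ x| ≤ L * |y - x| := by
    simpa only [Real.dist_eq] using hlip.dist_le_mul y x
  calc (ψ y - ψ x) ^ 2 = |ψ y - ψ x| * |ψ y - ψ x| := by rw [← sq, sq_abs]
    _ ≤ |ψ y - ψ x| * (L * |y - x|) := by gcongr
    _ = L * ((ψ y - ψ x) * (y - x)) := by rw [mul_left_comm, ← abs_mul, abs_of_nonneg hprod]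

lemma two_mul_sum_mul_mul_le {ι : Type*} (s : Finset ι) (x y : ι → ℝ) (q : ℝ) {α : ℝ}
    (hα : 0 < α) :
    2 * (∑ i ∈ s, x i * y i) * q ≤ α * ∑ i ∈ s, x i ^ 2 + α⁻¹ * (∑ i ∈ s, y i ^ 2) * q ^ 2 :=
  calc 2 * (∑ i ∈ s, x i * y i) * q = ∑ i ∈ s, 2 * x i * (y i * q) := by
        rw [mul_sum, sum_mul]; exact sum_congr rfl fun i _ => by ring
    _ ≤ ∑ i ∈ s, (α * x i ^ 2 + α⁻¹ * (y i * q) ^ 2) :=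
        sum_le_sum fun i _ => two_mul_le_add_mul_sq hα
    _ = α * ∑ i ∈ s, x i ^ 2 + α⁻¹ * (∑ i ∈ s, y i ^ 2) * q ^ 2 := by
        rw [sum_add_distrib, mul_sum, mul_sum, sum_mul]
        exact congrArg _ (sum_congr rfl fun i _ => by ring)

lemma le_of_hasDerivAt_of_forall_le_slope {φ f : ℝ → ℝ} {φ' x b : ℝ} (hφ : HasDerivAt φ φ' x)
    (hf : ContinuousWithinAt f (Ioi x) x) (hb : x < b) (h : ∀ t ∈ Ioo x b, f t ≤ slope φ x t) :
    f x ≤ φ' :=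
  le_of_tendsto_of_tendsto hf
    ((hasDerivWithinAt_iff_tendsto_slope' (lt_irrefl x)).mp hφ.hasDerivWithinAt)
    (eventually_of_mem (Ioo_mem_nhdsGT hb) h)

section StrongConvexity

variable {ι : Type*} [Fintype ι] {g : (ι → ℝ) → ℝ} {τ : ℝ}

lemma apply_add_smul_le_of_convexOn_sub_sum_sq
    (hg : ConvexOn ℝ univ fun b => g b - τ / 2 * ∑ j, b j ^ 2) (x d : ι → ℝ) {t : ℝ}
    (ht₀ : 0 ≤ t) (ht₁ : t ≤ 1) :
    g (x + t • d) ≤ (1 - t) * g x + t * g (x + d) - τ / 2 * (t * (1 - t)) * ∑ j, d j ^ 2 := by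
  have hconv := hg.2 (mem_univ x) (mem_univ (x + d)) (sub_nonneg.2 ht₁) ht₀ (by ring)
  have hpt : (1 - t) • x + t • (x + d) = x + t • d := by module
  have hsq : ∑ j, (x + t • d) j ^ 2
      = (1 - t) * ∑ j, x j ^ 2 + t * ∑ j, (x + d) j ^ 2 - t * (1 - t) * ∑ j, d j ^ 2 := by
    simp only [mul_sum, ← sum_add_distrib, ← sum_sub_distrib]
    exact sum_congr rfl fun j _ => by simp only [Pi.add_apply, Pi.smul_apply, smul_eq_mul]; ring
  simp only [smul_eq_mul, hpt, hsq] at hconv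
  linear_combination hconv

lemma sub_add_sum_sq_le_of_forall_le (hg : ConvexOn ℝ univ fun b => g b - τ / 2 * ∑ j, b j ^ 2)
    {F : (ι → ℝ) → ℝ} {x : ι → ℝ} (hmin : ∀ y, F x + g x ≤ F y + g y) {d : ι → ℝ} {F' : ℝ}
    (hF : HasDerivAt (fun t : ℝ => F (x + t • d)) F' 0) :
    g x - g (x + d) + τ / 2 * ∑ j, d j ^ 2 ≤ F' := by
  have hlim := le_of_hasDerivAt_of_forall_le_slope hF
    (f := fun t => g x - g (x + d) + τ / 2 * (1 - t) * ∑ j, d j ^ 2)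
    (by fun_prop) zero_lt_one fun t ⟨ht₀, ht₁⟩ => by
      have hcomb := apply_add_smul_le_of_convexOn_sub_sum_sq hg x d ht₀.le ht₁.le
      have hle := hmin (x + t • d)
      rw [slope_def_field, sub_zero, le_div_iff₀ ht₀, zero_smul, add_zero]
      linarith
  simpa using hlim

end StrongConvexity

lemma hasDerivAt_sum_comp_sub_mul {ι : Type*} [Fintype ι] {ρ ψ : ℝ → ℝ}
    (hρ : ∀ x, HasDerivAt ρ (ψ x) x) (r v : ι → ℝ) :
    HasDerivAt (fun t => ∑ i, ρ (r i - t * v i)) (∑ i, ψ (r i) * -v i) 0 :=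
  HasDerivAt.fun_sum fun i _ => by
    simpa [Function.comp_def] using
      (hρ (r i - 0 * v i)).comp 0 ((hasDerivAt_mul_const (v i)).const_sub (r i))

lemma sub_add_sum_sq_le_of_isMEstimator {ι κ : Type*} [Fintype ι] [Fintype κ] {ρ ψ : ℝ → ℝ}
    (hρ : ∀ x, HasDerivAt ρ (ψ x) x) {g : (κ → ℝ) → ℝ} {τ : ℝ}
    (hg : ConvexOn ℝ univ fun b => g b - τ / 2 * ∑ j, b j ^ 2) (c : ℝ) (β : κ → ℝ) (ε : ι → ℝ)
    (M : Matrix ι κ ℝ) (e : κ → ℝ)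
    (hmin : ∀ b, c * (∑ i, ρ (ε i - M.mulVec e i)) + g (β + e)
      ≤ c * (∑ i, ρ (ε i - M.mulVec (b - β) i)) + g b) (d : κ → ℝ) :
    g (β + e) - g (β + e + d) + τ / 2 * ∑ j, d j ^ 2
      ≤ c * ∑ i, ψ (ε i - M.mulVec e i) * -M.mulVec d i := by
  have hline : (fun t : ℝ => c * ∑ i, ρ (ε i - M.mulVec (β + e + t • d - β) i))
      = fun t => c * ∑ i, ρ ((ε i - M.mulVec e i) - t * M.mulVec d i) := by
    funext t
    rw [add_assoc, add_sub_cancel_left]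
    simp only [mulVec_add, mulVec_smul, Pi.add_apply, Pi.smul_apply, smul_eq_mul,
      sub_add_eq_sub_sub]
  refine sub_add_sum_sq_le_of_forall_le hg (F := fun b => c * ∑ i, ρ (ε i - M.mulVec (b - β) i))
    (fun b => by simpa only [add_sub_cancel_left] using hmin b) ?_
  rw [hline]
  exact (hasDerivAt_sum_comp_sub_mul hρ _ _).const_mul c

lemma add_vecMulVec_mulVec_apply {ι κ : Type*} [Fintype κ] (X : Matrix ι κ ℝ) (η : ι → ℝ)
    (a v : κ → ℝ) (i : ι) :
    (X + vecMulVec η a).mulVec v i = X.mulVec v i + η i * ∑ j, v j * a j := by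
  simp [add_mulVec, vecMulVec_mulVec, dotProduct, mul_comm]

lemma sum_mul_neg_mulVec_add_vecMulVec {ι κ : Type*} [Fintype ι] [Fintype κ]
    (X : Matrix ι κ ℝ) (η : ι → ℝ) (a h ht : κ → ℝ) (ε u ut : ι → ℝ) :
    (∑ i, u i * -X.mulVec (ht - h) i) + ∑ i, ut i * -(X + vecMulVec η a).mulVec (h - ht) i
      = -(∑ i, (ut i - u i) * ((ε i - (X + vecMulVec η a).mulVec ht i) - (ε i - X.mulVec h i)))
        + (∑ j, (ht j - h j) * a j) * (∑ i, η i * u i)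
        - (∑ j, h j * a j) * ∑ i, (ut i - u i) * η i := by
  simp only [add_vecMulVec_mulVec_apply, mulVec_sub, Pi.sub_apply, sub_mul, sum_sub_distrib]
  generalize ∑ j, ht j * a j = cT
  generalize ∑ j, h j * a j = cH
  simp only [mul_sum, ← sum_add_distrib, ← sum_sub_distrib, ← sum_neg_distrib]
  exact sum_congr rfl fun i _ => by ring

lemma basic_inequality_rankOne_perturbation {n p : ℕ} (hn : 0 < n) {ρ ψ : ℝ → ℝ}
    (hρ : ∀ x, HasDerivAt ρ (ψ x) x) {g : (Fin p → ℝ) → ℝ} {τ : ℝ}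
    (hg : ConvexOn ℝ univ fun b => g b - τ / 2 * ∑ j, b j ^ 2) (β : Fin p → ℝ)
    (ε η : Fin n → ℝ) (a : Fin p → ℝ) (X : Matrix (Fin n) (Fin p) ℝ) (h ht : Fin p → ℝ)
    (hmin : ∀ b : Fin p → ℝ,
      (1 / (n : ℝ)) * (∑ i, ρ (ε i - X.mulVec h i)) + g (β + h)
        ≤ (1 / (n : ℝ)) * (∑ i, ρ (ε i - X.mulVec (b - β) i)) + g b)
    (hmint : ∀ b : Fin p → ℝ,
      (1 / (n : ℝ)) * (∑ i, ρ (ε i - (X + vecMulVec η a).mulVec ht i)) + g (β + ht)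
        ≤ (1 / (n : ℝ)) * (∑ i, ρ (ε i - (X + vecMulVec η a).mulVec (b - β) i)) + g b) :
    n * τ * ∑ j, (ht j - h j) ^ 2
      + ∑ i, (ψ (ε i - (X + vecMulVec η a).mulVec ht i) - ψ (ε i - X.mulVec h i))
          * ((ε i - (X + vecMulVec η a).mulVec ht i) - (ε i - X.mulVec h i))
      ≤ (∑ j, (ht j - h j) * a j) * (∑ i, η i * ψ (ε i - X.mulVec h i))
        - (∑ j, h j * a j)
          * ∑ i, (ψ (ε i - (X + vecMulVec η a).mulVec ht i) - ψ (ε i - X.mulVec h i)) * η i := by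
  have hX := sub_add_sum_sq_le_of_isMEstimator hρ hg _ β ε X h hmin (ht - h)
  have hXt := sub_add_sum_sq_le_of_isMEstimator hρ hg _ β ε _ ht hmint (h - ht)
  rw [add_assoc, add_sub_cancel] at hX hXt
  have hsum := add_le_add hX hXt
  rw [← mul_add, sum_mul_neg_mulVec_add_vecMulVec X η a h ht ε] at hsum
  simp only [Pi.sub_apply, sub_sq_comm (h _)] at hsum
  have hscaled := mul_le_mul_of_nonneg_left hsum (Nat.cast_nonneg n)
  rw [← mul_assoc, mul_one_div_cancel (Nat.cast_pos.2 hn).ne', one_mul] at hscaled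
  linarith

/-- Rank-one perturbation stability of the regularized M-estimator:
`nτ‖β̂(ε,X+ηaᵀ)-β̂(ε,X)‖² + L⁻¹‖ψ̂(ε,X+ηaᵀ)-ψ̂(ε,X)‖²
  ≤ (nτ)⁻¹‖a‖²(ηᵀψ̂)² + L(hᵀa)²‖η‖²`. -/
theorem stmt18 {n p : ℕ} (hn : 0 < n)
    (ρ ψ : ℝ → ℝ) (L : NNReal) (hL : (0 : ℝ) < L)
    (hρconv : ConvexOn ℝ Set.univ ρ)
    (hρderiv : ∀ x, HasDerivAt ρ (ψ x) x)
    (hψlip : LipschitzWith L ψ)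
    (g : (Fin p → ℝ) → ℝ) (τ : ℝ) (hτ : 0 < τ)
    (hgconv : ConvexOn ℝ Set.univ (fun b => g b - τ / 2 * ∑ j, b j ^ 2))
    (β : Fin p → ℝ)
    (ε η : Fin n → ℝ) (a : Fin p → ℝ) (X : Matrix (Fin n) (Fin p) ℝ)
    -- `h` is the error of the M-estimator for design `X`, `ht` for design `X + ηaᵀ`
    (h ht : Fin p → ℝ)
    (hmin : ∀ b : Fin p → ℝ,
      (1 / (n : ℝ)) * (∑ i, ρ (ε i - X.mulVec h i)) + g (β + h)
        ≤ (1 / (n : ℝ)) * (∑ i, ρ (ε i - X.mulVec (b - β) i)) + g b)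
    (hmint : ∀ b : Fin p → ℝ,
      (1 / (n : ℝ)) * (∑ i, ρ (ε i - (X + vecMulVec η a).mulVec ht i)) + g (β + ht)
        ≤ (1 / (n : ℝ)) * (∑ i, ρ (ε i - (X + vecMulVec η a).mulVec (b - β) i)) + g b) :
    (n : ℝ) * τ * (∑ j, (ht j - h j) ^ 2)
      + (L : ℝ)⁻¹ *
          (∑ i, (ψ (ε i - (X + vecMulVec η a).mulVec ht i) - ψ (ε i - X.mulVec h i)) ^ 2)
      ≤ ((n : ℝ) * τ)⁻¹ * (∑ j, a j ^ 2) *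
          (∑ i, η i * ψ (ε i - X.mulVec h i)) ^ 2
        + (L : ℝ) * (∑ j, h j * a j) ^ 2 * (∑ i, η i ^ 2) := by
  have hbasic := basic_inequality_rankOne_perturbation hn hρderiv hgconv β ε η a X h ht hmin hmint
  have hψ := hρconv.monotone_of_hasDerivAt hρderiv
  have hcoco : (L : ℝ)⁻¹ *
      ∑ i, (ψ (ε i - (X + vecMulVec η a).mulVec ht i) - ψ (ε i - X.mulVec h i)) ^ 2
      ≤ ∑ i, (ψ (ε i - (X + vecMulVec η a).mulVec ht i) - ψ (ε i - X.mulVec h i))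
          * ((ε i - (X + vecMulVec η a).mulVec ht i) - (ε i - X.mulVec h i)) := by
    rw [inv_mul_le_iff₀ hL, mul_sum]
    exact sum_le_sum fun i _ => hψ.sq_sub_le_of_lipschitzWith hψlip _ _
  have hδ := two_mul_sum_mul_mul_le univ (fun j => ht j - h j) a
    (∑ i, η i * ψ (ε i - X.mulVec h i)) (mul_pos (Nat.cast_pos.2 hn) hτ)
  have hκ := two_mul_sum_mul_mul_le univ
    (fun i => ψ (ε i - (X + vecMulVec η a).mulVec ht i) - ψ (ε i - X.mulVec h i)) η
    (-∑ j, h j * a j) (inv_pos.2 hL)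
  rw [inv_inv, neg_sq] at hκ
  linarith
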